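/- Let X = ℓ²(ℤ, ℂ) with orthonormal basis (e_n)_{n∈ℤ}, and let S be the bilateral weighted backward shift determined by S e_n = 2√2 · e_{n−1} for n ≥ 1 and S e_n = (1/(2√2)) · e_{n−1} for n ≤ 0. Then S is an invertible bounded linear operator that has the shadowing property, but S is not uniformly expansive and S is not hyperbolic. -/

import Mathlib

/-!
The weighted shift `S` contracts, at rate `(2√2)⁻¹`, the sequences supported on `m ≤ 0`, and `S⁻¹`
contracts those supported on `m ≥ 1`; the two pieces span `ℓ²`, so `S` is generalized hyperbolic.
Splitting the errors `z n = x (n + 1) - S (x n)` of a pseudo-orbit along the two pieces and summing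
geometric series (the stable part carried forward from the past, the unstable part backward from the
future) gives a bounded solution `c` of `c (n + 1) = S (c n) + z n`, and `x - c` is a true orbit.
Unlike in a hyperbolic splitting, the second piece is not `S`-invariant (`S e₁ = 2√2 e₀`), and
indeed the whole orbit of `e₀` stays in the unit ball, which neither uniform expansivity nor
hyperbolicity allows.
-/

open Filter Topology

noncomputable section

/-- `T` has the shadowing property. -/
def ShadowingProperty {Y : Type*} [NormedAddCommGroup Y] [NormedSpace ℂ Y]
    (T : (Y →L[ℂ] Y)ˣ) : Prop :=
  ∀ ε > (0 : ℝ), ∃ δ > (0 : ℝ), ∀ x : ℤ → Y,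
    (∀ n : ℤ, ‖x (n + 1) - (T : Y →L[ℂ] Y) (x n)‖ ≤ δ) →
      ∃ y : Y, ∀ n : ℤ, ‖x n - ((T ^ n : (Y →L[ℂ] Y)ˣ) : Y →L[ℂ] Y) y‖ ≤ ε

/-- An invertible operator `S` is uniformly expansive if there is a positive integer `n`
such that every unit vector `x` satisfies `‖Sⁿ x‖ ≥ 2` or `‖S⁻ⁿ x‖ ≥ 2`. -/
def UniformlyExpansive {Y : Type*} [NormedAddCommGroup Y] [NormedSpace ℂ Y]
    (S : (Y →L[ℂ] Y)ˣ) : Prop :=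
  ∃ n : ℕ, 0 < n ∧ ∀ x : Y, ‖x‖ = 1 →
    2 ≤ ‖((S ^ (n : ℤ) : (Y →L[ℂ] Y)ˣ) : Y →L[ℂ] Y) x‖ ∨
    2 ≤ ‖((S ^ (-(n : ℤ)) : (Y →L[ℂ] Y)ˣ) : Y →L[ℂ] Y) x‖

/-- An invertible operator `T` is hyperbolic if `X = M ⊕ N` for closed `T`-invariant
subspaces with the restrictions of `T` to `M` and of `T⁻¹` to `N` of spectral radius
less than one. -/
def Hyperbolic {Y : Type*} [NormedAddCommGroup Y] [NormedSpace ℂ Y]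
    (T : (Y →L[ℂ] Y)ˣ) : Prop :=
  ∃ M N : Submodule ℂ Y, IsClosed (M : Set Y) ∧ IsClosed (N : Set Y) ∧ IsCompl M N ∧
    Submodule.map ((T : Y →L[ℂ] Y) : Y →ₗ[ℂ] Y) M = M ∧
    Submodule.map ((T : Y →L[ℂ] Y) : Y →ₗ[ℂ] Y) N = N ∧
    ∃ (A : M →L[ℂ] M) (B : N →L[ℂ] N),
      (∀ m : M, (A m : Y) = (T : Y →L[ℂ] Y) (m : Y)) ∧
      (∀ v : N, (B v : Y) = ((T⁻¹ : (Y →L[ℂ] Y)ˣ) : Y →L[ℂ] Y) (v : Y)) ∧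
      spectralRadius ℂ A < 1 ∧ spectralRadius ℂ B < 1

/-- The standard orthonormal basis vectors of `ℓ²(ℤ, ℂ)`. -/
def e (n : ℤ) : lp (fun _ : ℤ => ℂ) 2 := lp.single 2 n 1

section Contraction

variable {𝕜 E : Type*} [NormedField 𝕜] [NormedAddCommGroup E] [NormedSpace 𝕜 E]

def ContractsOn (f : E →L[𝕜] E) (s : Set E) (a : ℝ) : Prop :=
  ∀ x ∈ s, f x ∈ s ∧ ‖f x‖ ≤ a * ‖x‖

variable {f : E →L[𝕜] E} {s : Set E} {a δ : ℝ}

lemma ContractsOn.pow_apply (hf : ContractsOn f s a) (ha : 0 ≤ a) {x : E} (hx : x ∈ s) :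
    ∀ k : ℕ, (f ^ k) x ∈ s ∧ ‖(f ^ k) x‖ ≤ a ^ k * ‖x‖
  | 0 => by simpa using hx
  | k + 1 => by
    obtain ⟨hmem, hnorm⟩ := hf.pow_apply ha hx k
    rw [pow_succ', mul_apply_eq_comp, pow_succ', mul_assoc]
    exact ⟨(hf _ hmem).1, (hf _ hmem).2.trans (mul_le_mul_of_nonneg_left hnorm ha)⟩

lemma ContractsOn.norm_pow_apply_le (hf : ContractsOn f s a) (ha : 0 ≤ a) {x : E} (hx : x ∈ s)
    (hxδ : ‖x‖ ≤ δ) (k : ℕ) : ‖(f ^ k) x‖ ≤ a ^ k * δ :=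
  (hf.pow_apply ha hx k).2.trans (mul_le_mul_of_nonneg_left hxδ (pow_nonneg ha k))

/-- For contracting `f`, the bounded solution of `c (n + 1) = f (c n) + p n`. -/
def pastSum (f : E →L[𝕜] E) (p : ℤ → E) (n : ℤ) : E :=
  ∑' k : ℕ, (f ^ k) (p (n - 1 - k))

variable {p : ℤ → E}

lemma norm_pastSum_le (ha₀ : 0 ≤ a) (ha₁ : a < 1) (hp : ∀ k m, ‖(f ^ k) (p m)‖ ≤ a ^ k * δ)
    (n : ℤ) : ‖pastSum f p n‖ ≤ δ / (1 - a) :=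
  tsum_of_norm_bounded (by simpa [div_eq_inv_mul] using
    (hasSum_geometric_of_lt_one ha₀ ha₁).mul_right δ) fun k => hp k _

lemma pastSum_succ [CompleteSpace E] (ha₀ : 0 ≤ a) (ha₁ : a < 1)
    (hp : ∀ k m, ‖(f ^ k) (p m)‖ ≤ a ^ k * δ) (n : ℤ) :
    pastSum f p (n + 1) = p n + f (pastSum f p n) := by
  have hsum : Summable fun k : ℕ => (f ^ k) (p (n - 1 - k)) :=
    ((summable_geometric_of_lt_one ha₀ ha₁).mul_right δ).of_norm_bounded fun k => hp k _
  have hshift : ∀ k : ℕ,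
      (f ^ (k + 1)) (p (n + 1 - 1 - (k + 1 : ℕ))) = f ((f ^ k) (p (n - 1 - k))) := by
    intro k
    rw [pow_succ', mul_apply_eq_comp]
    congr 3
    push_cast
    ring
  unfold pastSum
  rw [tsum_eq_zero_add' ((hsum.mapL f).congr fun k => (hshift k).symm), f.map_tsum hsum]
  simp only [hshift]
  simp

end Contraction

section Orbit

variable {𝕜 E : Type*} [NormedField 𝕜] [NormedAddCommGroup E] [NormedSpace 𝕜 E]

@[simp]
lemma Units.apply_inv_apply (T : (E →L[𝕜] E)ˣ) (x : E) :
    (T : E →L[𝕜] E) ((↑T⁻¹ : E →L[𝕜] E) x) = x := by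
  rw [← mul_apply_eq_comp, T.mul_inv, one_apply_eq_self]

@[simp]
lemma Units.inv_apply_apply (T : (E →L[𝕜] E)ˣ) (x : E) :
    (↑T⁻¹ : E →L[𝕜] E) ((T : E →L[𝕜] E) x) = x := by
  rw [← mul_apply_eq_comp, T.inv_mul, one_apply_eq_self]

lemma eq_zpow_apply_of_forall_succ {T : (E →L[𝕜] E)ˣ} {u : ℤ → E}
    (h : ∀ n, u (n + 1) = (T : E →L[𝕜] E) (u n)) (n : ℤ) :
    u n = (↑(T ^ n) : E →L[𝕜] E) (u 0) := by
  induction n using Int.induction_on with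
  | zero => simp
  | succ k ih => rw [h, ih, add_comm, zpow_add, zpow_one, Units.val_mul, mul_apply_eq_comp]
  | pred k ih =>
    rw [← T.inv_apply_apply (u _), ← h, sub_add_cancel, ih, sub_eq_neg_add, zpow_add,
      zpow_neg_one, Units.val_mul, mul_apply_eq_comp]

end Orbit

/-- Generalized hyperbolicity, with a norm contraction in place of spectral radius `< 1`: unlike
for `Hyperbolic`, `stable` need only be `T`-invariant and `unstable` only `T⁻¹`-invariant. -/
structure GeneralizedHyperbolicSplitting {𝕜 E : Type*} [NormedField 𝕜] [NormedAddCommGroup E]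
    [NormedSpace 𝕜 E] (T : (E →L[𝕜] E)ˣ) where
  stable : Set E
  unstable : Set E
  proj : E →L[𝕜] E
  proj_mem : ∀ x, proj x ∈ stable
  sub_proj_mem : ∀ x, x - proj x ∈ unstable
  rate : ℝ
  rate_nonneg : 0 ≤ rate
  rate_lt_one : rate < 1
  contractsOn_stable : ContractsOn (T : E →L[𝕜] E) stable rate
  contractsOn_unstable : ContractsOn (↑T⁻¹ : E →L[𝕜] E) unstable rate

namespace GeneralizedHyperbolicSplitting

variable {𝕜 E : Type*} [NontriviallyNormedField 𝕜] [NormedAddCommGroup E] [NormedSpace 𝕜 E]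
  {T : (E →L[𝕜] E)ˣ} (h : GeneralizedHyperbolicSplitting T)

lemma exists_bounded_solution [CompleteSpace E] {z : ℤ → E} {δ : ℝ} (hz : ∀ n, ‖z n‖ ≤ δ) :
    ∃ c : ℤ → E, (∀ n, c (n + 1) = (T : E →L[𝕜] E) (c n) + z n) ∧
      ∀ n, ‖c n‖ ≤ (‖h.proj‖ + ‖1 - h.proj‖) * δ / (1 - h.rate) := by
  set P := h.proj
  set a := h.rate
  have hPz : ∀ k m, ‖((T : E →L[𝕜] E) ^ k) (P (z m))‖ ≤ a ^ k * (‖P‖ * δ) := fun k m =>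
    h.contractsOn_stable.norm_pow_apply_le h.rate_nonneg (h.proj_mem _)
      ((P.le_opNorm _).trans (by gcongr; exact hz m)) k
  -- The unstable part is a `pastSum` for `T⁻¹` with time reversed:
  -- `B n = ∑_{k ≥ 0} T⁻¹ ^ (k + 1) ((1 - P) (z (n + k)))`.
  set q : ℤ → E := fun m => (↑T⁻¹ : E →L[𝕜] E) ((1 - P) (z (-m - 1)))
  have hq : ∀ k m, ‖((↑T⁻¹ : E →L[𝕜] E) ^ k) (q m)‖ ≤ a ^ k * (‖1 - P‖ * δ) := by
    intro k m
    obtain ⟨hmem, hnorm⟩ := h.contractsOn_unstable _ (h.sub_proj_mem (z (-m - 1)))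
    refine h.contractsOn_unstable.norm_pow_apply_le h.rate_nonneg hmem ?_ k
    exact hnorm.trans <| (mul_le_of_le_one_left (norm_nonneg _) h.rate_lt_one.le).trans <|
      ((1 - P).le_opNorm _).trans (by gcongr; exact hz _)
  set A := pastSum (T : E →L[𝕜] E) (fun m => P (z m))
  set B := fun n => pastSum (↑T⁻¹ : E →L[𝕜] E) q (-n)
  have hA : ∀ n, A (n + 1) = P (z n) + (T : E →L[𝕜] E) (A n) :=
    pastSum_succ h.rate_nonneg h.rate_lt_one hPz
  have hB : ∀ n, (T : E →L[𝕜] E) (B n) = (1 - P) (z n) + B (n + 1) := by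
    intro n
    have hrec : B n = (↑T⁻¹ : E →L[𝕜] E) ((1 - P) (z n) + B (n + 1)) := by
      rw [map_add]
      convert pastSum_succ h.rate_nonneg h.rate_lt_one hq (-n - 1) using 2 <;> simp [B, q]
      ring_nf
    rw [hrec, T.apply_inv_apply]
  refine ⟨fun n => A n - B n, fun n => ?_, fun n => ?_⟩
  · dsimp only
    rw [hA, map_sub, hB, sub_apply, one_apply_eq_self]
    abel
  · dsimp only
    calc ‖A n - B n‖ ≤ ‖A n‖ + ‖B n‖ := norm_sub_le _ _
        _ ≤ ‖P‖ * δ / (1 - a) + ‖1 - P‖ * δ / (1 - a) :=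
          add_le_add (norm_pastSum_le h.rate_nonneg h.rate_lt_one hPz n)
            (norm_pastSum_le h.rate_nonneg h.rate_lt_one hq (-n))
        _ = (‖P‖ + ‖1 - P‖) * δ / (1 - a) := by ring

lemma norm_zpow_apply_le {x : E} (hx : x ∈ h.stable) (hx' : (↑T⁻¹ : E →L[𝕜] E) x ∈ h.unstable)
    (n : ℤ) : ‖(↑(T ^ n) : E →L[𝕜] E) x‖ ≤ max ‖x‖ ‖(↑T⁻¹ : E →L[𝕜] E) x‖ := by
  have hpow : ∀ {f : E →L[𝕜] E} {s : Set E} {y : E}, ContractsOn f s h.rate → y ∈ s →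
      ∀ k : ℕ, ‖(f ^ k) y‖ ≤ ‖y‖ := fun hf hy k =>
    (hf.pow_apply h.rate_nonneg hy k).2.trans
      (mul_le_of_le_one_left (norm_nonneg _) (pow_le_one₀ h.rate_nonneg h.rate_lt_one.le))
  obtain ⟨k, rfl | rfl⟩ := n.eq_nat_or_neg
  · rw [zpow_natCast, Units.val_pow_eq_pow_val]
    exact (hpow h.contractsOn_stable hx k).trans (le_max_left _ _)
  · cases k with
    | zero => simp
    | succ k =>
      rw [zpow_neg, zpow_natCast, ← inv_pow, Units.val_pow_eq_pow_val, pow_succ,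
        mul_apply_eq_comp]
      exact (hpow h.contractsOn_unstable hx' k).trans (le_max_right _ _)

end GeneralizedHyperbolicSplitting

theorem GeneralizedHyperbolicSplitting.shadowingProperty {E : Type*} [NormedAddCommGroup E]
    [NormedSpace ℂ E] [CompleteSpace E] {T : (E →L[ℂ] E)ˣ} (h : GeneralizedHyperbolicSplitting T) :
    ShadowingProperty T := by
  intro ε hε
  set K := ‖h.proj‖ + ‖1 - h.proj‖
  have ha : 0 < 1 - h.rate := sub_pos.2 h.rate_lt_one
  refine ⟨ε * (1 - h.rate) / (K + 1), by positivity, fun x hx => ?_⟩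
  obtain ⟨c, hc, hcε⟩ := h.exists_bounded_solution hx
  have horbit : ∀ n, x (n + 1) - c (n + 1) = (T : E →L[ℂ] E) (x n - c n) := by
    intro n
    rw [hc, map_sub]
    abel
  refine ⟨x 0 - c 0, fun n => ?_⟩
  rw [← eq_zpow_apply_of_forall_succ (u := fun n => x n - c n) horbit n, sub_sub_cancel]
  calc ‖c n‖ ≤ K * (ε * (1 - h.rate) / (K + 1)) / (1 - h.rate) := hcε n
    _ = K / (K + 1) * ε := by field_simp
    _ ≤ ε := mul_le_of_le_one_left hε.le ((div_le_one (by positivity)).2 (by linarith))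

lemma tendsto_norm_pow_of_spectralRadius_lt_one {A : Type*} [NormedRing A] [NormedAlgebra ℂ A]
    [CompleteSpace A] (a : A) (ha : spectralRadius ℂ a < 1) :
    Tendsto (fun n : ℕ => ‖a ^ n‖) atTop (𝓝 0) := by
  obtain ⟨r, har, hr1⟩ := ENNReal.lt_iff_exists_nnreal_btwn.1 ha
  have hr1 : (r : ℝ) < 1 := by exact_mod_cast hr1
  have hroot : ∀ᶠ n : ℕ in atTop, ENNReal.ofReal (‖a ^ n‖ ^ (1 / n : ℝ)) < r :=
    (spectrum.pow_norm_pow_one_div_tendsto_nhds_spectralRadius a).eventually_lt_const har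
  refine squeeze_zero' (.of_forall fun n => norm_nonneg _) ?_
    (tendsto_pow_atTop_nhds_zero_of_lt_one r.coe_nonneg hr1)
  filter_upwards [hroot, eventually_ne_atTop 0] with n hn hn0
  rw [ENNReal.ofReal_lt_iff_lt_toReal (by positivity) ENNReal.coe_ne_top, ENNReal.coe_toReal,
    one_div] at hn
  calc ‖a ^ n‖ = (‖a ^ n‖ ^ (n⁻¹ : ℝ)) ^ n :=
        (Real.rpow_inv_natCast_pow (norm_nonneg _) hn0).symm
    _ ≤ r ^ n := by gcongr

section Restriction

variable {𝕜 E : Type*} [NontriviallyNormedField 𝕜] [NormedAddCommGroup E] [NormedSpace 𝕜 E]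
  {M : Submodule 𝕜 E}

lemma apply_mem_of_map_eq_self {U : (E →L[𝕜] E)ˣ}
    (hM : M.map ((U : E →L[𝕜] E) : E →ₗ[𝕜] E) = M) {y : E} (hy : y ∈ M) :
    (U : E →L[𝕜] E) y ∈ M :=
  hM ▸ Submodule.mem_map_of_mem hy

lemma inv_apply_mem_of_map_eq_self {U : (E →L[𝕜] E)ˣ}
    (hM : M.map ((U : E →L[𝕜] E) : E →ₗ[𝕜] E) = M) {y : E} (hy : y ∈ M) :
    (↑U⁻¹ : E →L[𝕜] E) y ∈ M := by
  rw [← hM] at hy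
  obtain ⟨z, hz, rfl⟩ := hy
  simpa using hz

lemma norm_pow_apply_le_of_restrict {f : E →L[𝕜] E} {A : M →L[𝕜] M}
    (hA : ∀ m : M, (A m : E) = f m) (k : ℕ) (m : M) : ‖(f ^ k) (m : E)‖ ≤ ‖A ^ k‖ * ‖m‖ := by
  have hpow : ∀ k : ℕ, ∀ m : M, ((A ^ k) m : E) = (f ^ k) m := by
    intro k
    induction k with
    | zero => simp
    | succ k ih =>
      intro m
      rw [pow_succ', pow_succ', mul_apply_eq_comp, mul_apply_eq_comp, hA, ih]
  rw [← hpow, Submodule.norm_coe]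
  exact (A ^ k).le_opNorm m

lemma eq_zero_of_norm_inv_pow_apply_le {U : (E →L[𝕜] E)ˣ}
    (hM : ∀ y ∈ M, (↑U⁻¹ : E →L[𝕜] E) y ∈ M) {A : M →L[𝕜] M}
    (hA : ∀ m : M, (A m : E) = (U : E →L[𝕜] E) m)
    (hA₀ : Tendsto (fun k : ℕ => ‖A ^ k‖) atTop (𝓝 0))
    {x : E} (hx : x ∈ M) {C : ℝ} (hC : ∀ k : ℕ, ‖(↑(U⁻¹ ^ k) : E →L[𝕜] E) x‖ ≤ C) : x = 0 := by
  have hmem : ∀ k : ℕ, (↑(U⁻¹ ^ k) : E →L[𝕜] E) x ∈ M := by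
    intro k
    induction k with
    | zero => simpa
    | succ k ih => rw [pow_succ', Units.val_mul, mul_apply_eq_comp]; exact hM _ ih
  have hbound : ∀ k : ℕ, ‖x‖ ≤ ‖A ^ k‖ * C := fun k => calc
    ‖x‖ = ‖((U : E →L[𝕜] E) ^ k) ((↑(U⁻¹ ^ k) : E →L[𝕜] E) x)‖ := by
      rw [← Units.val_pow_eq_pow_val, ← mul_apply_eq_comp, ← Units.val_mul, inv_pow,
        mul_inv_cancel, Units.val_one, one_apply_eq_self]
    _ ≤ ‖A ^ k‖ * ‖(↑(U⁻¹ ^ k) : E →L[𝕜] E) x‖ := norm_pow_apply_le_of_restrict hA k ⟨_, hmem k⟩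
    _ ≤ ‖A ^ k‖ * C := by gcongr; exact hC k
  exact norm_le_zero_iff.1 (ge_of_tendsto' (by simpa using hA₀.mul_const C) hbound)

end Restriction

/-- Write `x = m + v` with `m ∈ M`, `v ∈ N`. The forward orbit of `m`, hence that of `v`, is
bounded, which forces `v = 0`; then `x ∈ M` has a bounded backward orbit, which forces `x = 0`. -/
theorem Hyperbolic.eq_zero_of_norm_zpow_apply_le {E : Type*} [NormedAddCommGroup E]
    [NormedSpace ℂ E] [CompleteSpace E] {T : (E →L[ℂ] E)ˣ} (hT : Hyperbolic T) {x : E} {C : ℝ}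
    (hx : ∀ n : ℤ, ‖(↑(T ^ n) : E →L[ℂ] E) x‖ ≤ C) : x = 0 := by
  obtain ⟨M, N, hMc, hNc, hMN, hTM, hTN, A, B, hA, hB, hrA, hrB⟩ := hT
  have : CompleteSpace M := hMc.completeSpace_coe
  have : CompleteSpace N := hNc.completeSpace_coe
  have hA₀ := tendsto_norm_pow_of_spectralRadius_lt_one A hrA
  obtain ⟨m, hm, v, hv, rfl⟩ : ∃ m ∈ M, ∃ v ∈ N, m + v = x :=
    Submodule.mem_sup.1 (hMN.sup_eq_top ▸ Submodule.mem_top)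
  obtain ⟨D, hD⟩ := hA₀.bddAbove_range
  have hv0 : v = 0 := by
    refine eq_zero_of_norm_inv_pow_apply_le (U := T⁻¹) (fun y hy => ?_) (A := B) hB
      (tendsto_norm_pow_of_spectralRadius_lt_one B hrB) hv (C := C + D * ‖m‖) fun k => ?_
    · simpa using apply_mem_of_map_eq_self hTN hy
    · have hTm : ‖(↑(T ^ k) : E →L[ℂ] E) m‖ ≤ D * ‖m‖ := by
        rw [Units.val_pow_eq_pow_val]
        exact (norm_pow_apply_le_of_restrict hA k ⟨m, hm⟩).trans
          (mul_le_mul_of_nonneg_right (hD (Set.mem_range_self k)) (norm_nonneg _))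
      calc ‖(↑(T⁻¹⁻¹ ^ k) : E →L[ℂ] E) v‖
          = ‖(↑(T ^ (k : ℤ)) : E →L[ℂ] E) (m + v) - (↑(T ^ k) : E →L[ℂ] E) m‖ := by
            rw [inv_inv, zpow_natCast, map_add, add_sub_cancel_left]
        _ ≤ C + D * ‖m‖ := (norm_sub_le _ _).trans (add_le_add (hx k) hTm)
  subst hv0
  rw [add_zero] at hx ⊢
  exact eq_zero_of_norm_inv_pow_apply_le (fun y hy => inv_apply_mem_of_map_eq_self hTM hy) hA hA₀
    hm fun k => by simpa using hx (-k)

lemma not_uniformlyExpansive_of_norm_zpow_apply_le {E : Type*} [NormedAddCommGroup E]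
    [NormedSpace ℂ E] {T : (E →L[ℂ] E)ˣ} {x : E} (hx : ‖x‖ = 1) {C : ℝ} (hC : C < 2)
    (h : ∀ n : ℤ, ‖(↑(T ^ n) : E →L[ℂ] E) x‖ ≤ C) : ¬ UniformlyExpansive T := by
  rintro ⟨n, -, hn⟩
  rcases hn x hx with hn' | hn' <;> linarith [h n, h (-n)]

open scoped ENNReal

section Reindex

variable {α E : Type*} [NormedAddCommGroup E] {p : ℝ≥0∞} {C : ℝ}

lemma summable_mul_norm_comp_rpow (hp : 0 < p.toReal) (x : lp (fun _ : α => E) p) (σ : α ≃ α)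
    (hC : 0 ≤ C) : Summable fun i => (C * ‖x (σ i)‖) ^ p.toReal := by
  simp_rw [Real.mul_rpow hC (norm_nonneg _)]
  exact ((σ.summable_iff (f := fun i => ‖x i‖ ^ p.toReal)).2
    ((lp.memℓp x).summable hp)).mul_left _

lemma memℓp_of_norm_le_mul_comp (hp : 0 < p.toReal) (x : lp (fun _ : α => E) p) (σ : α ≃ α)
    (hC : 0 ≤ C) {y : α → E} (hy : ∀ i, ‖y i‖ ≤ C * ‖x (σ i)‖) : Memℓp y p :=
  memℓp_gen <| (summable_mul_norm_comp_rpow hp x σ hC).of_nonneg_of_le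
    (fun _ => Real.rpow_nonneg (norm_nonneg _) _) fun i => by gcongr; exact hy i

lemma lp.norm_le_of_norm_le_mul_comp (hp : 0 < p.toReal) {x y : lp (fun _ : α => E) p}
    (σ : α ≃ α) (hC : 0 ≤ C) (hy : ∀ i, ‖y i‖ ≤ C * ‖x (σ i)‖) : ‖y‖ ≤ C * ‖x‖ := by
  refine lp.norm_le_of_tsum_le hp (mul_nonneg hC (lp.norm_nonneg' x)) ?_
  calc ∑' i, ‖y i‖ ^ p.toReal ≤ ∑' i, (C * ‖x (σ i)‖) ^ p.toReal :=
        ((lp.memℓp y).summable hp).tsum_le_tsum (fun i => by gcongr; exact hy i)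
          (summable_mul_norm_comp_rpow hp x σ hC)
    _ = (C * ‖x‖) ^ p.toReal := by
        rw [Real.mul_rpow hC (lp.norm_nonneg' x), lp.norm_rpow_eq_tsum hp x, ← tsum_mul_left,
          ← σ.tsum_eq fun i => C ^ p.toReal * ‖x i‖ ^ p.toReal]
        simp_rw [Real.mul_rpow hC (norm_nonneg _)]

end Reindex

namespace WeightedShift

abbrev H : Type := lp (fun _ : ℤ => ℂ) 2

lemma two_toReal_pos : 0 < (2 : ℝ≥0∞).toReal := by norm_num

def weightedShift (c : ℤ → ℂ) (k : ℤ) (C : ℝ) (hc : ∀ m, ‖c m‖ ≤ C) : H →L[ℂ] H :=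
  LinearMap.mkContinuous
    { toFun := fun x => ⟨fun m => c m * x (m + k),
        memℓp_of_norm_le_mul_comp two_toReal_pos x (Equiv.addRight k)
          ((norm_nonneg _).trans (hc 0)) fun m => by
            rw [norm_mul]; exact mul_le_mul_of_nonneg_right (hc m) (norm_nonneg _)⟩
      map_add' := fun x y => by ext m; simp only [lp.coeFn_add, Pi.add_apply, mul_add]
      map_smul' := fun a x => by
        ext m
        simp only [lp.coeFn_smul, Pi.smul_apply, smul_eq_mul, RingHom.id_apply, mul_left_comm] }
    C fun x => lp.norm_le_of_norm_le_mul_comp two_toReal_pos (Equiv.addRight k)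
      ((norm_nonneg _).trans (hc 0)) fun m => by
        change ‖c m * x (m + k)‖ ≤ _
        rw [norm_mul]; exact mul_le_mul_of_nonneg_right (hc m) (norm_nonneg _)

@[simp]
lemma weightedShift_apply (c : ℤ → ℂ) (k : ℤ) (C : ℝ) (hc : ∀ m, ‖c m‖ ≤ C) (x : H) (m : ℤ) :
    weightedShift c k C hc x m = c m * x (m + k) := rfl

lemma e_apply (n m : ℤ) : e n m = if m = n then 1 else 0 := by
  simp [e, Pi.single_apply]

lemma norm_e (n : ℤ) : ‖e n‖ = 1 := by
  simp [e]

variable (r : ℝ)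

def shiftWeight (n : ℤ) : ℂ := if 1 ≤ n then (r : ℂ) else ((r⁻¹ : ℝ) : ℂ)

lemma norm_shiftWeight_le (n : ℤ) : ‖shiftWeight r n‖ ≤ |r| + |r⁻¹| := by
  unfold shiftWeight
  split_ifs <;> simp [abs_nonneg]

lemma norm_shiftWeight_inv_le (n : ℤ) : ‖(shiftWeight r n)⁻¹‖ ≤ |r| + |r⁻¹| := by
  unfold shiftWeight
  split_ifs <;> simp [abs_nonneg]

def backwardShift : H →L[ℂ] H :=
  weightedShift (fun m => shiftWeight r (m + 1)) 1 _ fun m => norm_shiftWeight_le r (m + 1)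

def forwardShift : H →L[ℂ] H :=
  weightedShift (fun m => (shiftWeight r m)⁻¹) (-1) _ (norm_shiftWeight_inv_le r)

lemma backwardShift_apply (x : H) (m : ℤ) :
    backwardShift r x m = shiftWeight r (m + 1) * x (m + 1) :=
  rfl

lemma forwardShift_apply (x : H) (m : ℤ) :
    forwardShift r x m = (shiftWeight r m)⁻¹ * x (m - 1) :=
  rfl

lemma backwardShift_e (n : ℤ) : backwardShift r (e n) = shiftWeight r n • e (n - 1) := by
  ext m
  simp only [backwardShift_apply, lp.coeFn_smul, Pi.smul_apply, smul_eq_mul, e_apply]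
  by_cases hm : m = n - 1
  · simp [hm]
  · simp [hm, show m + 1 ≠ n by omega]

lemma forwardShift_e (n : ℤ) : forwardShift r (e n) = (shiftWeight r (n + 1))⁻¹ • e (n + 1) := by
  ext m
  simp only [forwardShift_apply, lp.coeFn_smul, Pi.smul_apply, smul_eq_mul, e_apply]
  by_cases hm : m = n + 1
  · simp [hm]
  · simp [hm, show m - 1 ≠ n by omega]

variable {r}

lemma shiftWeight_ne_zero (hr : r ≠ 0) (n : ℤ) : shiftWeight r n ≠ 0 := by
  unfold shiftWeight
  split_ifs <;> simp [hr]

def backwardShiftUnit (hr : r ≠ 0) : (H →L[ℂ] H)ˣ where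
  val := backwardShift r
  inv := forwardShift r
  val_inv := by
    ext x m
    simp [backwardShift_apply, forwardShift_apply, shiftWeight_ne_zero hr]
  inv_val := by
    ext x m
    simp [backwardShift_apply, forwardShift_apply, shiftWeight_ne_zero hr]

lemma eq_backwardShift_of_apply_e {S : H →L[ℂ] H}
    (hS : ∀ n, S (e n) = shiftWeight r n • e (n - 1)) : S = backwardShift r :=
  lp.ext_continuousLinearMap (by norm_num) fun n => ContinuousLinearMap.ext fun a => by
    have hsingle : lp.single 2 n a = a • e n := by rw [e, ← lp.single_smul, smul_eq_mul, mul_one]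
    simp only [ContinuousLinearMap.comp_apply, lp.singleContinuousLinearMap_apply, hsingle,
      map_smul, hS, backwardShift_e]

lemma contractsOn_backwardShift (hr : 1 < r) :
    ContractsOn (backwardShift r) {x : H | ∀ m, 1 ≤ m → x m = 0} r⁻¹ := by
  intro x hx
  refine ⟨fun m hm => by rw [backwardShift_apply, hx _ (by omega), mul_zero], ?_⟩
  refine lp.norm_le_of_norm_le_mul_comp two_toReal_pos (Equiv.addRight 1) (by positivity)
    fun m => ?_
  rw [backwardShift_apply, norm_mul]
  by_cases hm : 1 ≤ m + 1
  · simp [hx _ hm]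
  · simp [shiftWeight, hm, abs_of_pos (zero_lt_one.trans hr)]

lemma contractsOn_forwardShift (hr : 1 < r) :
    ContractsOn (forwardShift r) {x : H | ∀ m ≤ 0, x m = 0} r⁻¹ := by
  intro x hx
  refine ⟨fun m hm => by rw [forwardShift_apply, hx _ (by omega), mul_zero], ?_⟩
  refine lp.norm_le_of_norm_le_mul_comp two_toReal_pos (Equiv.addRight (-1)) (by positivity)
    fun m => show _ ≤ r⁻¹ * ‖x (m - 1)‖ from ?_
  rw [forwardShift_apply, norm_mul]
  by_cases hm : m - 1 ≤ 0
  · simp [hx _ hm]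
  · simp [shiftWeight, show 1 ≤ m by omega, abs_of_pos (zero_lt_one.trans hr)]

def restrictNonpos : H →L[ℂ] H :=
  weightedShift (fun m => if m ≤ 0 then 1 else 0) 0 1 fun m => by split_ifs <;> simp

lemma restrictNonpos_apply (x : H) (m : ℤ) : restrictNonpos x m = if m ≤ 0 then x m else 0 := by
  simp [restrictNonpos]

def backwardShiftSplitting (hr : 1 < r) :
    GeneralizedHyperbolicSplitting (backwardShiftUnit (zero_lt_one.trans hr).ne') where
  stable := {x | ∀ m, 1 ≤ m → x m = 0}
  unstable := {x | ∀ m ≤ 0, x m = 0}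
  proj := restrictNonpos
  proj_mem x m hm := by rw [restrictNonpos_apply, if_neg (by omega)]
  sub_proj_mem x m hm := by
    rw [lp.coeFn_sub, Pi.sub_apply, restrictNonpos_apply, if_pos hm, sub_self]
  rate := r⁻¹
  rate_nonneg := by positivity
  rate_lt_one := inv_lt_one_of_one_lt₀ hr
  contractsOn_stable := contractsOn_backwardShift hr
  contractsOn_unstable := contractsOn_forwardShift hr

lemma norm_backwardShiftUnit_zpow_apply_e_zero_le (hr : 1 < r) (n : ℤ) :
    ‖(↑(backwardShiftUnit (zero_lt_one.trans hr).ne' ^ n) : H →L[ℂ] H) (e 0)‖ ≤ 1 := by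
  have hinv : (↑(backwardShiftUnit (zero_lt_one.trans hr).ne')⁻¹ : H →L[ℂ] H) (e 0)
      = (shiftWeight r 1)⁻¹ • e 1 := forwardShift_e r 0
  refine ((backwardShiftSplitting hr).norm_zpow_apply_le (fun m hm => ?_) ?_ n).trans
    (max_le (norm_e 0).le ?_)
  · rw [e_apply, if_neg (by omega)]
  · intro m hm
    rw [hinv, lp.coeFn_smul, Pi.smul_apply, e_apply, if_neg (by omega), smul_zero]
  · rw [hinv, norm_smul, norm_e, mul_one]
    simpa [shiftWeight, abs_of_pos (zero_lt_one.trans hr)] using inv_le_one_of_one_le₀ hr.le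

end WeightedShift

open WeightedShift

/-- The bilateral weighted backward shift `S e_n = 2√2 e_{n-1}` (`n ≥ 1`),
`S e_n = (2√2)⁻¹ e_{n-1}` (`n ≤ 0`) on `ℓ²(ℤ, ℂ)` is an invertible operator which has
the shadowing property but is neither uniformly expansive nor hyperbolic. -/
theorem backward_shift_shadowing_not_expansive_not_hyperbolic
    (S : lp (fun _ : ℤ => ℂ) 2 →L[ℂ] lp (fun _ : ℤ => ℂ) 2)
    (hS₁ : ∀ n : ℤ, 1 ≤ n → S (e n) = ((2 * Real.sqrt 2 : ℝ) : ℂ) • e (n - 1))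
    (hS₂ : ∀ n : ℤ, n ≤ 0 → S (e n) = (((2 * Real.sqrt 2 : ℝ)⁻¹ : ℝ) : ℂ) • e (n - 1)) :
    ∃ U : (lp (fun _ : ℤ => ℂ) 2 →L[ℂ] lp (fun _ : ℤ => ℂ) 2)ˣ,
      (U : lp (fun _ : ℤ => ℂ) 2 →L[ℂ] lp (fun _ : ℤ => ℂ) 2) = S ∧
      ShadowingProperty U ∧ ¬ UniformlyExpansive U ∧ ¬ Hyperbolic U := by
  have hr : 1 < 2 * Real.sqrt 2 := by
    nlinarith [Real.one_lt_sqrt_two]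
  have hS : S = backwardShift (2 * Real.sqrt 2) := eq_backwardShift_of_apply_e fun n => by
    unfold shiftWeight
    split_ifs with hn
    exacts [hS₁ n hn, hS₂ n (by omega)]
  have horbit := norm_backwardShiftUnit_zpow_apply_e_zero_le hr
  refine ⟨_, hS.symm, (backwardShiftSplitting hr).shadowingProperty,
    not_uniformlyExpansive_of_norm_zpow_apply_le (norm_e 0) (by norm_num) horbit,
    fun hT => ?_⟩
  simpa [norm_e] using congrArg norm (hT.eq_zero_of_norm_zpow_apply_le horbit)
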